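/- Let n ≥ 3 and let P(x_1,…,x_{n-1},s) = Σ_{0<j<j+k≤n} x_j x_k s^{n-j-k}. The real vector field which is the real part of X'_{-1} = 2∂/∂ζ + Σ_{j=2}^{n-1}(2j-2-n) z_{j-1} ∂/∂z_j is tangent to the hypersurface M_0 = {(w,z,ζ) ∈ ℂ^{n+1} : Re(w) = P(Re z_1,…,Re z_{n-1}, Re ζ)}; i.e., applying Re(X'_{-1}) to the defining function Re(w) - P(Re z, Re ζ) gives a function vanishing on M_0 (in fact vanishing identically). -/

import Mathlib

open scoped BigOperators

/-- Index `k` as an element of `Fin (n+1)` (coordinates `(w, z_1, …, z_{n-1}, ζ)`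
of `ℂ^{n+1}`: `w` is index `0`, `z_j` is index `j`, `ζ` is index `n`). -/
def idx (n k : ℕ) : Fin (n + 1) := ⟨k % (n + 1), Nat.mod_lt _ (Nat.succ_pos n)⟩

/-- `P(x_1,…,x_{n-1},s) = Σ_{0<j<j+k≤n} x_j x_k s^{n-j-k}` with `x_j = Re z_j`
and `s = Re ζ`, as a function on `ℂ^{n+1}`. -/
noncomputable def Pmod (n : ℕ) : (Fin (n + 1) → ℂ) → ℝ :=
  fun p => ∑ j : Fin (n + 1), ∑ k : Fin (n + 1),
    if 1 ≤ (j : ℕ) ∧ 1 ≤ (k : ℕ) ∧ (j : ℕ) + (k : ℕ) ≤ n then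
      (p j).re * (p k).re * ((p (idx n n)).re) ^ (n - (j : ℕ) - (k : ℕ))
    else 0

/-- Defining function `ρ = Re w - P` of the model hypersurface `M₀ = {ρ = 0}`. -/
noncomputable def rho (n : ℕ) : (Fin (n + 1) → ℂ) → ℝ :=
  fun p => (p (idx n 0)).re - Pmod n p

/-- The holomorphic field `X'_{-1} = 2 ∂/∂ζ + Σ_{j=2}^{n-1} (2j-2-n) z_{j-1} ∂/∂z_j`. -/
noncomputable def vfXprime (n : ℕ) : (Fin (n + 1) → ℂ) → (Fin (n + 1) → ℂ) :=
  fun p =>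
    (Pi.single (idx n n) 2 : Fin (n + 1) → ℂ)
      + ∑ j ∈ Finset.Icc 2 (n - 1),
          (((2 * (j : ℤ) - 2 - (n : ℤ) : ℤ) : ℂ) * p (idx n (j - 1)))
            • (Pi.single (idx n j) 1 : Fin (n + 1) → ℂ)

/-! Write `x_j = Re z_j`, `s = Re ζ` and `w_{ik} = x_i x_k s^{n-1-i-k}`. Since `P` is symmetric
in the pair `(j, k)`, the `z`-part of the field contributes
`2 Σ_{j ≥ 2} (2j-2-n) x_{j-1} x_k s^{n-j-k} = 2 Σ_{i+k ≤ n-1} (2i-n) w_{ik}` (`i = j - 1`),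
and symmetrising `2i - n` in `(i, k)` turns this into `-2 Σ (n-i-k) w_{ik}`, which is exactly
`-2 ∂P/∂s`; the `ζ`-part contributes `2 ∂P/∂s`. -/

open Finset

def pairs (n : ℕ) : Finset (ℕ × ℕ) :=
  (Icc 1 n ×ˢ Icc 1 n).filter fun q => q.1 + q.2 ≤ n

lemma mem_pairs {n : ℕ} {q : ℕ × ℕ} :
    q ∈ pairs n ↔ 1 ≤ q.1 ∧ 1 ≤ q.2 ∧ q.1 + q.2 ≤ n := by
  simp only [pairs, mem_filter, mem_product, mem_Icc]
  omega

lemma sum_pairs_swap {M : Type*} [AddCommMonoid M] (n : ℕ) (f : ℕ → ℕ → M) :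
    ∑ q ∈ pairs n, f q.1 q.2 = ∑ q ∈ pairs n, f q.2 q.1 :=
  sum_nbij' Prod.swap Prod.swap (by simp [mem_pairs]; omega) (by simp [mem_pairs]; omega)
    (by simp) (by simp) (by simp)

lemma sum_pairs_add_self_of_symm {R : Type*} [CommSemiring R] (n : ℕ) (c : ℕ → R)
    {w : ℕ → ℕ → R} (hw : ∀ i k, w i k = w k i) :
    ∑ q ∈ pairs n, c q.1 * w q.1 q.2 + ∑ q ∈ pairs n, c q.1 * w q.1 q.2
      = ∑ q ∈ pairs n, (c q.1 + c q.2) * w q.1 q.2 := by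
  nth_rewrite 2 [sum_pairs_swap n fun i k => c i * w i k]
  rw [← sum_add_distrib]
  exact sum_congr rfl fun q _ => by rw [hw q.2, add_mul]

lemma sum_pairs_ite_two_le {M : Type*} [AddCommMonoid M] (n : ℕ) (f : ℕ → ℕ → M) :
    ∑ q ∈ pairs n, (if 2 ≤ q.1 then f q.1 q.2 else 0)
      = ∑ q ∈ pairs (n - 1), f (q.1 + 1) q.2 := by
  rw [← sum_filter]
  refine sum_nbij' (fun q => (q.1 - 1, q.2)) (fun q => (q.1 + 1, q.2))
    (by simp [mem_pairs]; omega) (by simp [mem_pairs]; omega) (by simp [mem_pairs]; omega)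
    (by simp) fun q hq => ?_
  simp only [mem_filter, mem_pairs] at hq
  rw [Nat.sub_add_cancel (by omega : 1 ≤ q.1)]

lemma sum_pairs_natCast_sub_mul_eq_pred {R : Type*} [Semiring R] (n : ℕ) (g : ℕ → ℕ → R) :
    ∑ q ∈ pairs n, ((n - q.1 - q.2 : ℕ) : R) * g q.1 q.2
      = ∑ q ∈ pairs (n - 1), ((n - q.1 - q.2 : ℕ) : R) * g q.1 q.2 := by
  refine (sum_subset (fun q => by simp only [mem_pairs]; omega) fun q hq hq' => ?_).symm
  simp only [mem_pairs] at hq hq'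
  rw [show n - q.1 - q.2 = 0 by omega, Nat.cast_zero, zero_mul]

lemma idx_val {n i : ℕ} (hi : i ≤ n) : (idx n i : ℕ) = i :=
  Nat.mod_eq_of_lt (Nat.lt_succ_of_le hi)

lemma idx_val_eq (n : ℕ) (j : Fin (n + 1)) : idx n j = j :=
  Fin.ext (idx_val (Nat.le_of_lt_succ j.isLt))

lemma idx_inj {n i j : ℕ} (hi : i ≤ n) (hj : j ≤ n) : idx n i = idx n j ↔ i = j := by
  rw [Fin.ext_iff, idx_val hi, idx_val hj]

lemma sum_fin_ite_eq_sum_pairs {M : Type*} [AddCommMonoid M] (n : ℕ) (f : ℕ → ℕ → M) :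
    ∑ j : Fin (n + 1), ∑ k : Fin (n + 1),
        (if 1 ≤ (j : ℕ) ∧ 1 ≤ (k : ℕ) ∧ (j : ℕ) + (k : ℕ) ≤ n then f j k else 0)
      = ∑ q ∈ pairs n, f q.1 q.2 := by
  rw [← sum_product', ← sum_filter]
  refine sum_nbij' (fun q => (q.1, q.2)) (fun q => (idx n q.1, idx n q.2)) ?_ ?_ ?_ ?_ (by simp)
  · simp [mem_pairs]
  · intro q hq
    simp only [mem_pairs] at hq
    simp [idx_val (by omega : q.1 ≤ n), idx_val (by omega : q.2 ≤ n), hq]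
  · simp [idx_val_eq]
  · intro q hq
    simp only [mem_pairs] at hq
    simp [idx_val (by omega : q.1 ≤ n), idx_val (by omega : q.2 ≤ n)]

lemma Pmod_eq_sum_pairs (n : ℕ) (p : Fin (n + 1) → ℂ) :
    Pmod n p = ∑ q ∈ pairs n,
      (p (idx n q.1)).re * (p (idx n q.2)).re * (p (idx n n)).re ^ (n - q.1 - q.2) := by
  rw [Pmod, ← sum_fin_ite_eq_sum_pairs n fun j k =>
    (p (idx n j)).re * (p (idx n k)).re * (p (idx n n)).re ^ (n - j - k)]
  simp only [idx_val_eq]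

lemma fderiv_mul_mul_pow_apply {𝕜 E : Type*} [NontriviallyNormedField 𝕜]
    [NormedAddCommGroup E] [NormedSpace 𝕜 E] (a b c : E →L[𝕜] 𝕜) (m : ℕ) (p v : E) :
    fderiv 𝕜 (fun q => a q * b q * c q ^ m) p v
      = (a v * b p + a p * b v) * c p ^ m + a p * b p * (m * c p ^ (m - 1) * c v) := by
  rw [((a.hasFDerivAt.fun_mul b.hasFDerivAt).fun_mul (c.hasFDerivAt.pow m)).fderiv]
  simp only [nsmul_eq_mul, smul_add, add_apply, smul_apply, smul_eq_mul]
  ring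

/-- The derivative of `P` at `x` along `y`, where `x i = Re p_i`, so that `x n = s`. -/
noncomputable def modelPolyDeriv (n : ℕ) (x y : ℕ → ℝ) : ℝ :=
  ∑ q ∈ pairs n, ((y q.1 * x q.2 + x q.1 * y q.2) * x n ^ (n - q.1 - q.2)
    + x q.1 * x q.2 * ((n - q.1 - q.2 : ℕ) * x n ^ (n - q.1 - q.2 - 1) * y n))

lemma fderiv_rho_apply (n : ℕ) (p v : Fin (n + 1) → ℂ) :
    fderiv ℝ (rho n) p v = (v (idx n 0)).re
      - modelPolyDeriv n (fun i => (p (idx n i)).re) (fun i => (v (idx n i)).re) := by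
  let re (i : ℕ) : (Fin (n + 1) → ℂ) →L[ℝ] ℝ :=
    Complex.reCLM.comp (ContinuousLinearMap.proj (idx n i))
  have hrho : rho n = fun p =>
      re 0 p - ∑ q ∈ pairs n, re q.1 p * re q.2 p * re n p ^ (n - q.1 - q.2) :=
    funext fun p => by rw [rho, Pmod_eq_sum_pairs]; rfl
  rw [hrho, fderiv_fun_sub (by fun_prop) (by fun_prop), fderiv_fun_sum fun q _ => by fun_prop]
  simp only [sub_apply, _root_.sum_apply, ContinuousLinearMap.fderiv, fderiv_mul_mul_pow_apply]
  rfl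

lemma sum_pairs_field_shift (n : ℕ) (x y : ℕ → ℝ)
    (hy : ∀ j, 1 ≤ j → j < n → y j = if 2 ≤ j then (2 * j - 2 - n) * x (j - 1) else 0) :
    ∑ q ∈ pairs n, y q.1 * x q.2 * x n ^ (n - q.1 - q.2)
      = ∑ q ∈ pairs (n - 1),
          (2 * q.1 - n : ℝ) * (x q.1 * x q.2 * x n ^ (n - q.1 - q.2 - 1)) :=
  calc
    _ = ∑ q ∈ pairs n, if 2 ≤ q.1 then
          (2 * q.1 - 2 - n : ℝ) * x (q.1 - 1) * x q.2 * x n ^ (n - q.1 - q.2) else 0 := by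
        refine sum_congr rfl fun q hq => ?_
        rw [mem_pairs] at hq
        rw [hy q.1 hq.1 (by omega)]
        split_ifs <;> ring
    _ = _ := by
        rw [sum_pairs_ite_two_le n fun j k =>
          (2 * j - 2 - n : ℝ) * x (j - 1) * x k * x n ^ (n - j - k)]
        refine sum_congr rfl fun q hq => ?_
        rw [mem_pairs] at hq
        rw [Nat.add_sub_cancel, show n - (q.1 + 1) - q.2 = n - q.1 - q.2 - 1 by omega]
        push_cast
        ring

lemma modelPolyDeriv_eq_zero (n : ℕ) (x y : ℕ → ℝ) (hyn : y n = 2)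
    (hy : ∀ j, 1 ≤ j → j < n → y j = if 2 ≤ j then (2 * j - 2 - n) * x (j - 1) else 0) :
    modelPolyDeriv n x y = 0 := by
  set w : ℕ → ℕ → ℝ := fun i k => x i * x k * x n ^ (n - i - k - 1) with hw
  have hw_symm : ∀ i k, w i k = w k i := fun i k => by
    simp only [hw, Nat.sub_right_comm n i k, mul_comm (x i)]
  set A := ∑ q ∈ pairs (n - 1), (2 * q.1 - n : ℝ) * w q.1 q.2
  set B := ∑ q ∈ pairs (n - 1), ((n - q.1 - q.2 : ℕ) : ℝ) * w q.1 q.2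
  have hleft : ∑ q ∈ pairs n, y q.1 * x q.2 * x n ^ (n - q.1 - q.2) = A :=
    sum_pairs_field_shift n x y hy
  have hright : ∑ q ∈ pairs n, x q.1 * y q.2 * x n ^ (n - q.1 - q.2) = A := by
    rw [sum_pairs_swap n fun j k => x j * y k * x n ^ (n - j - k), ← hleft]
    exact sum_congr rfl fun q _ => by rw [Nat.sub_right_comm, mul_comm (x q.2)]
  have hradial : ∑ q ∈ pairs n,
      x q.1 * x q.2 * ((n - q.1 - q.2 : ℕ) * x n ^ (n - q.1 - q.2 - 1) * y n) = 2 * B := calc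
    _ = ∑ q ∈ pairs n, ((n - q.1 - q.2 : ℕ) : ℝ) * (2 * w q.1 q.2) :=
        sum_congr rfl fun q _ => by rw [hyn]; ring
    _ = 2 * B := by
        rw [sum_pairs_natCast_sub_mul_eq_pred n fun i k => 2 * w i k, mul_sum]
        exact sum_congr rfl fun q _ => by ring
  have hA : A + A = -(2 * B) := by
    refine (sum_pairs_add_self_of_symm (n - 1) (fun i : ℕ => (2 * i - n : ℝ)) hw_symm).trans ?_
    rw [mul_sum, ← sum_neg_distrib]
    refine sum_congr rfl fun q hq => ?_
    rw [mem_pairs] at hq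
    rw [Nat.cast_sub (by omega), Nat.cast_sub (by omega)]
    ring
  simp only [modelPolyDeriv, add_mul, sum_add_distrib]
  rw [hleft, hright, hradial, hA]
  ring

lemma vfXprime_apply_idx (n : ℕ) (p : Fin (n + 1) → ℂ) {i : ℕ} (hi : i ≤ n) :
    vfXprime n p (idx n i)
      = (if i = n then 2 else 0)
        + if 2 ≤ i ∧ i ≤ n - 1 then
            ((2 * (i : ℤ) - 2 - (n : ℤ) : ℤ) : ℂ) * p (idx n (i - 1)) else 0 := by
  simp only [vfXprime, Pi.add_apply, Finset.sum_apply, Pi.smul_apply, Pi.single_apply,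
    idx_inj hi le_rfl, smul_eq_mul, mul_ite, mul_one, mul_zero]
  rw [sum_congr rfl fun j hj =>
    if_congr (idx_inj hi ((mem_Icc.1 hj).2.trans (Nat.sub_le n 1))) rfl rfl, sum_ite_eq]
  simp only [mem_Icc]

lemma re_vfXprime_apply_idx (n : ℕ) (p : Fin (n + 1) → ℂ) {i : ℕ} (hi : i ≤ n) :
    (vfXprime n p (idx n i)).re
      = (if i = n then 2 else 0)
        + if 2 ≤ i ∧ i ≤ n - 1 then (2 * i - 2 - n) * (p (idx n (i - 1))).re else 0 := by
  rw [vfXprime_apply_idx n p hi]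
  split_ifs <;> simp

/-- The real part of the field `X'_{-1}` is tangent to the model hypersurface
`M₀ = {Re w = P}`: applying it to the defining function `ρ = Re w - P`
gives a function vanishing identically. -/
theorem Xprime_tangent_to_model (n : ℕ) (hn : 3 ≤ n) :
    ∀ p : Fin (n + 1) → ℂ, fderiv ℝ (rho n) p (vfXprime n p) = 0 := by
  intro p
  rw [fderiv_rho_apply, re_vfXprime_apply_idx n p (Nat.zero_le n), modelPolyDeriv_eq_zero]
  · simp only [if_neg (by omega : 0 ≠ n), if_neg (by omega : ¬(2 ≤ 0 ∧ 0 ≤ n - 1))]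
    ring
  · rw [re_vfXprime_apply_idx n p le_rfl, if_pos rfl, if_neg (by omega), add_zero]
  · intro j _ hjn
    rw [re_vfXprime_apply_idx n p hjn.le, if_neg hjn.ne, zero_add]
    exact if_congr (by omega) rfl rfl
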